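/- Let n, d, m be integers with d ≥ 2, n ≥ 2d, gcd(d, n) = 1 and m ≥ 1, and let T = m·n jobs be scheduled by the round-robin policy with blocks B_1, …, B_T. Then ∑_{i=2}^{T} |B_1 ∩ B_i|² = (m−1)·d² + m·d(d−1)(2d−1)/3, and consequently the average squared overlap (∑_{i=2}^{T} |B_1 ∩ B_i|²)/(T − 1) converges to d(2d² + 1)/(3n) as m → ∞; i.e., the overlap diversity factor of the round-robin policy is ODF_round-robin = 3n/(d(2d² + 1)). -/

import Mathlib

/-!
Job `i` occupies the translate of the first block `{0, …, d-1}` by `(i-1)·d`, so `|B₁ ∩ Bᵢ|`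
depends only on `(i-1)·d mod n`, and jobs `1, …, m·n` contribute `m` times the sum over all
residues `a` of `|B₁ ∩ (a·d + B₁)|²` (job 1 itself contributes `d²`). Since `d` is a unit mod `n`,
this is the sum over all translates `k < n`, and for `2d ≤ n` the overlap with the translate by
`k` is `(d - k) + (k + d - n)` (truncated subtraction, at most one term nonzero). Its squares add
up to `d² + 2 ∑_{k<d} k²`; the limit follows since the sum grows linearly in `m`.
-/

open Filter Finset
open scoped Pointwise

namespace ZMod

variable {M : Type*} [AddCommMonoid M] {n : ℕ} [NeZero n]

lemma sum_range_natCast_eq_sum_univ (f : ZMod n → M) : ∑ a ∈ range n, f a = ∑ x, f x :=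
  sum_nbij' (↑) ZMod.val (fun _ _ ↦ mem_univ _) (fun x _ ↦ mem_range.mpr x.val_lt)
    (fun _ ha ↦ ZMod.val_cast_of_lt (mem_range.mp ha)) (fun x _ ↦ ZMod.natCast_zmod_val x)
    (fun _ _ ↦ rfl)

lemma sum_range_mul_natCast (f : ZMod n → M) (m : ℕ) :
    ∑ a ∈ range (m * n), f a = m • ∑ x, f x := by
  induction m with
  | zero => simp
  | succ m ih =>
    simp only [add_mul, one_mul, sum_range_add, ih, Nat.cast_add, Nat.cast_mul,
      ZMod.natCast_self, mul_zero, zero_add, sum_range_natCast_eq_sum_univ, succ_nsmul]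

end ZMod

namespace Finset

lemma sum_Icc_two_pred_add {M : Type*} [AddCommMonoid M] (h : ℕ → M) {N : ℕ} (hN : 1 ≤ N) :
    h 0 + ∑ i ∈ Icc 2 N, h (i - 1) = ∑ a ∈ range N, h a := by
  rw [range_eq_Ico, sum_eq_sum_Ico_succ_bot (by omega), ← Ico_add_one_right_eq_Icc,
    show Ico 2 (N + 1) = Ico (1 + 1) (N + 1) from rfl, sum_Ico_add_right_sub_eq]

lemma sum_range_tsub_sq {c n : ℕ} (hcn : c ≤ n) :
    ∑ k ∈ range n, (c - k) ^ 2 = ∑ k ∈ range (c + 1), k ^ 2 := by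
  rw [← sum_subset (range_subset_range.mpr hcn) fun k _ hk ↦ by
      rw [Nat.sub_eq_zero_of_le (not_lt.mp (mem_range.not.mp hk)), zero_pow two_ne_zero],
    ← sum_range_reflect, sum_range_succ', pow_two 0, mul_zero, add_zero]
  exact sum_congr rfl fun k hk ↦ by
    rw [show c - (c - 1 - k) = k + 1 by have := mem_range.mp hk; omega]

lemma sum_range_sq_mul_six (d : ℕ) :
    (∑ k ∈ range d, (k : ℝ) ^ 2) * 6 = d * (d - 1) * (2 * d - 1) := by
  induction d with
  | zero => simp
  | succ d ih => rw [sum_range_succ]; push_cast; linear_combination ih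

end Finset

lemma tendsto_mul_sub_div_mul_sub_one (a b c : ℝ) (hc : 0 < c) :
    Tendsto (fun m : ℕ ↦ (m * a - b) / (m * c - 1)) atTop (nhds (a / c)) := by
  have hden : Tendsto (fun m : ℕ ↦ (m : ℝ) * c - 1) atTop atTop :=
    tendsto_atTop_add_const_right _ _ (tendsto_natCast_atTop_atTop.atTop_mul_const hc)
  have := tendsto_const_nhds (x := a / c) |>.add
    (tendsto_const_nhds (x := a / c - b) |>.div_atTop hden)
  rw [add_zero] at this
  refine this.congr' ?_
  filter_upwards [hden.eventually_gt_atTop 0] with m hm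
  rw [eq_div_iff hm.ne', add_mul, div_mul_cancel₀ _ hm.ne']
  field_simp
  ring

namespace RoundRobin

lemma card_filter_add_mod_lt {n d k : ℕ} (hdn : 2 * d ≤ n) (hk : k < n) :
    #{j ∈ range d | (k + j) % n < d} = (d - k) + (k + d - n) := by
  have hmod : ∀ j < d, ((k + j) % n < d ↔ k + j < d ∨ n ≤ k + j) := by
    intro j hj
    rcases lt_or_ge (k + j) n with h | h
    · rw [Nat.mod_eq_of_lt h]; omega
    · rw [Nat.mod_eq_sub_mod h, Nat.mod_eq_of_lt (by omega)]; omega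
  have : {j ∈ range d | (k + j) % n < d} = range (d - k) ∪ Ico (n - k) d := by
    ext j
    simp only [mem_filter, mem_range, mem_union, mem_Ico]
    constructor
    · rintro ⟨hj, hjk⟩; rw [hmod j hj] at hjk; omega
    · intro hj; exact ⟨by omega, (hmod j (by omega)).mpr (by omega)⟩
  rw [this, card_union_of_disjoint (disjoint_left.mpr fun j ↦ by simp; omega), card_range,
    Nat.card_Ico]
  omega

def firstBlock (n d : ℕ) : Finset (ZMod n) := (range d).image (↑)

lemma image_range_natCast_add (n c d : ℕ) :
    (range d).image (fun j ↦ ((c + j : ℕ) : ZMod n)) = (c : ZMod n) +ᵥ firstBlock n d := by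
  simp [firstBlock, vadd_finset_def, image_image, Function.comp_def]

lemma mem_firstBlock {n d : ℕ} (hdn : d ≤ n) {x : ZMod n} : x ∈ firstBlock n d ↔ x.val < d := by
  constructor
  · intro hx
    obtain ⟨j, hj, rfl⟩ := mem_image.mp hx
    rw [ZMod.val_natCast]
    exact (Nat.mod_le j n).trans_lt (mem_range.mp hj)
  · intro hx
    have : NeZero n := ⟨by omega⟩
    exact mem_image.mpr ⟨x.val, mem_range.mpr hx, ZMod.natCast_zmod_val x⟩

lemma card_firstBlock_inter_vadd {n d k : ℕ} (hdn : 2 * d ≤ n) (hk : k < n) :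
    #(firstBlock n d ∩ ((k : ZMod n) +ᵥ firstBlock n d)) = (d - k) + (k + d - n) := by
  have hinj : Set.InjOn (fun j ↦ ((k + j : ℕ) : ZMod n)) (range d) := by
    intro a ha b hb hab
    simp only [Nat.cast_add, add_right_inj, ZMod.natCast_eq_natCast_iff'] at hab
    simp only [coe_range, Set.mem_Iio] at ha hb
    rwa [Nat.mod_eq_of_lt (by omega), Nat.mod_eq_of_lt (by omega)] at hab
  rw [inter_comm, ← filter_mem_eq_inter, ← image_range_natCast_add, filter_image,
    card_image_of_injOn (hinj.mono (filter_subset _ _)), ← card_filter_add_mod_lt hdn hk]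
  congr 1
  exact filter_congr fun j _ ↦ by rw [mem_firstBlock (by omega), ZMod.val_natCast]

lemma sum_range_sq_tsub_add_tsub {n d : ℕ} (hdn : 2 * d ≤ n) :
    ∑ k ∈ range n, ((d - k) + (k + d - n)) ^ 2 = d ^ 2 + 2 * ∑ k ∈ range d, k ^ 2 := by
  have hsplit : ∀ k, ((d - k) + (k + d - n)) ^ 2 = (d - k) ^ 2 + (k + d - n) ^ 2 := fun k ↦ by
    rcases le_total d k with h | h
    · rw [Nat.sub_eq_zero_of_le h, zero_add, zero_pow two_ne_zero, zero_add]
    · rw [Nat.sub_eq_zero_of_le (show k + d ≤ n by omega), add_zero, zero_pow two_ne_zero,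
        add_zero]
  have hreflect : ∑ k ∈ range n, (k + d - n) ^ 2 + d ^ 2 = ∑ k ∈ range (n + 1), (d - k) ^ 2 := by
    rw [sum_range_succ', Nat.sub_zero, ← sum_range_reflect]
    exact congrArg (· + d ^ 2) <| sum_congr rfl fun k hk ↦ by
      rw [show n - 1 - k + d - n = d - (k + 1) by have := mem_range.mp hk; omega]
  rw [sum_range_tsub_sq (by omega), sum_range_succ] at hreflect
  rw [sum_congr rfl fun k _ ↦ hsplit k, sum_add_distrib, sum_range_tsub_sq (by omega),
    sum_range_succ]
  omega

lemma sum_range_mul_sq_card_firstBlock_inter_vadd {n d : ℕ} (hdn : 2 * d ≤ n)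
    (hd : d.Coprime n) (m : ℕ) :
    ∑ a ∈ range (m * n), #(firstBlock n d ∩ (((a * d : ℕ) : ZMod n) +ᵥ firstBlock n d)) ^ 2
      = m * (d ^ 2 + 2 * ∑ k ∈ range d, k ^ 2) := by
  have : NeZero n := ⟨by rintro rfl; rw [Nat.coprime_zero_right] at hd; omega⟩
  set F : ZMod n → ℕ := fun t ↦ #(firstBlock n d ∩ (t +ᵥ firstBlock n d)) ^ 2
  let u := ZMod.unitOfCoprime d hd
  calc ∑ a ∈ range (m * n), F ((a * d : ℕ) : ZMod n)
      = m • ∑ x, F (x * u) := by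
        simpa [u, ZMod.coe_unitOfCoprime] using
          ZMod.sum_range_mul_natCast (fun x : ZMod n ↦ F (x * u)) m
    _ = m • ∑ k ∈ range n, F k := by
        rw [Fintype.sum_equiv (Units.mulRight u) (fun x ↦ F (x * u)) F fun _ ↦ rfl,
          ZMod.sum_range_natCast_eq_sum_univ]
    _ = m * (d ^ 2 + 2 * ∑ k ∈ range d, k ^ 2) := by
        rw [smul_eq_mul, ← sum_range_sq_tsub_add_tsub hdn]
        exact congrArg (m * ·) <| sum_congr rfl fun k hk ↦
          congrArg (· ^ 2) (card_firstBlock_inter_vadd hdn (mem_range.mp hk))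

end RoundRobin

open RoundRobin

theorem roundRobin_ODF_general (n d : ℕ) (hn : 2 * d ≤ n)
    (hgcd : Nat.gcd d n = 1)
    (B : ℕ → Finset (ZMod n))
    (hB : ∀ i : ℕ, B i = (Finset.range d).image (fun j => (((i - 1) * d + j : ℕ) : ZMod n))) :
    (∀ m : ℕ, 1 ≤ m →
      (∑ i ∈ Finset.Icc 2 (m * n), ((B 1 ∩ B i).card : ℝ) ^ 2)
        = ((m : ℝ) - 1) * (d : ℝ) ^ 2
          + (m : ℝ) * (d : ℝ) * ((d : ℝ) - 1) * (2 * (d : ℝ) - 1) / 3) ∧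
    Tendsto (fun m : ℕ =>
        (∑ i ∈ Finset.Icc 2 (m * n), ((B 1 ∩ B i).card : ℝ) ^ 2) / ((m : ℝ) * n - 1))
      atTop (nhds ((d : ℝ) * (2 * (d : ℝ) ^ 2 + 1) / (3 * n))) := by
  have hn0 : 0 < n := Nat.pos_of_ne_zero <| by rintro rfl; rw [Nat.gcd_zero_right] at hgcd; omega
  have hBi : ∀ i, B i = (((i - 1) * d : ℕ) : ZMod n) +ᵥ firstBlock n d := fun i ↦ by
    rw [hB, image_range_natCast_add]
  have hB1 : B 1 = firstBlock n d := by simp [hBi]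
  have hperiod (m : ℕ) (hm : 1 ≤ m) :
      d ^ 2 + ∑ i ∈ Icc 2 (m * n), #(B 1 ∩ B i) ^ 2 = m * (d ^ 2 + 2 * ∑ k ∈ range d, k ^ 2) := by
    have h0 : #(firstBlock n d ∩ (((0 * d : ℕ) : ZMod n) +ᵥ firstBlock n d)) = d := by
      rw [zero_mul, card_firstBlock_inter_vadd hn hn0]; omega
    rw [hB1, ← sum_range_mul_sq_card_firstBlock_inter_vadd hn hgcd,
      ← sum_Icc_two_pred_add _ (Nat.mul_pos hm hn0), h0]
    simp only [hBi]
  have hsum (m : ℕ) (hm : 1 ≤ m) :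
      ∑ i ∈ Icc 2 (m * n), (#(B 1 ∩ B i) : ℝ) ^ 2
        = ((m : ℝ) - 1) * d ^ 2 + m * d * (d - 1) * (2 * d - 1) / 3 := by
    have := congrArg (Nat.cast : ℕ → ℝ) (hperiod m hm)
    push_cast at this
    linear_combination this + (m / 3) * sum_range_sq_mul_six d
  refine ⟨hsum, ?_⟩
  have hlim : ((d : ℝ) ^ 2 + d * (d - 1) * (2 * d - 1) / 3) / n
      = d * (2 * d ^ 2 + 1) / (3 * n) := by
    field_simp
    ring
  rw [← hlim]
  refine (tendsto_mul_sub_div_mul_sub_one _ ((d : ℝ) ^ 2) n (by positivity)).congr' ?_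
  filter_upwards [eventually_ge_atTop 1] with m hm
  rw [hsum m hm]
  ring

/-- Overlap diversity factor of the round-robin policy: with `T = m·n` jobs and blocks
`B i = {((i-1)·d + j) mod n : j < d}`, one has
`∑_{i=2}^{T} |B 1 ∩ B i|² = (m-1)·d² + m·d(d-1)(2d-1)/3`, and the average squared
overlap `(∑_{i=2}^{T} |B 1 ∩ B i|²)/(T-1)` converges to `d(2d²+1)/(3n)` as `m → ∞`
(ODF_round-robin = 3n/(d(2d²+1))). -/
theorem roundRobin_ODF (n d : ℕ) (hd : 2 ≤ d) (hn : 2 * d ≤ n)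
    (hgcd : Nat.gcd d n = 1)
    (B : ℕ → Finset (ZMod n))
    (hB : ∀ i : ℕ, B i = (Finset.range d).image (fun j => (((i - 1) * d + j : ℕ) : ZMod n))) :
    (∀ m : ℕ, 1 ≤ m →
      (∑ i ∈ Finset.Icc 2 (m * n), ((B 1 ∩ B i).card : ℝ) ^ 2)
        = ((m : ℝ) - 1) * (d : ℝ) ^ 2
          + (m : ℝ) * (d : ℝ) * ((d : ℝ) - 1) * (2 * (d : ℝ) - 1) / 3) ∧
    Tendsto (fun m : ℕ =>
        (∑ i ∈ Finset.Icc 2 (m * n), ((B 1 ∩ B i).card : ℝ) ^ 2) / ((m : ℝ) * n - 1))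
      atTop (nhds ((d : ℝ) * (2 * (d : ℝ) ^ 2 + 1) / (3 * n))) :=
  roundRobin_ODF_general n d hn hgcd B hB
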